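/- arXiv:2309.05143 — 3 statements merged into one kernel-verified Lean document; each statement's English description precedes it below -/
import Mathlib

section
/- Let x : ℝ → ℝⁿ be a differentiable curve with x(t) ≠ 0 for all t ≥ 0 that solves the preconditioned gradient flow x'(t) = −B⁻¹∇f(x(t)), where ∇f(x) = (2/(xᵀMx))(Ax − f(x)Mx), with x(0)ᵀB x(0) = 1 and f(x(0)) < λ₂. Then for all t ≥ 0, f(x(t)) − λ₁ ≤ e^{−Ct}·(f(x(0)) − λ₁), where C = 4λ₁(λ₂ − f(x(0)))/(κ_ν λ₂) and κ_ν = ν_max/ν_min. -/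
/-!
Write `λ₁ = lam 0`, `λ₂ = lam 1` and `g = ∇f(x)`. Along the flow `d/dt f(x) = -gᵀB⁻¹g ≤ 0`, and
`xᵀBx` is conserved because `xᵀ∇f(x) = 0`; so `f(x(t)) ≤ f(x(0)) < λ₂`, and by Grönwall it
suffices to prove the gradient-domination bound `C (f(x) - λ₁) ≤ gᵀB⁻¹g` whenever `xᵀBx = 1`.

Expand `x = ∑ cᵢ uᵢ` and test `g` against `v = (xᵀMx / 2) A⁻¹g = ∑ cᵢ (λᵢ - f)/λᵢ · uᵢ`:
Cauchy–Schwarz for the `B`-inner product and `ν_min B ≤ A` give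
`gᵀB⁻¹g ≥ 4 ν_min T / (xᵀMx)²` with `T = vᵀAv = ∑ cᵢ² (λᵢ - f)² / λᵢ`. As `f` is the
`cᵢ²`-weighted mean of the `λᵢ` and no `λᵢ` lies strictly between `λ₁` and `λ₂`,
`T ≥ f (f - λ₁)(λ₂ - f) / (λ₁λ₂) · xᵀMx`; finally `f · xᵀMx = xᵀAx ≤ ν_max`.
-/

open Matrix Finset

variable {ι : Type*} [Fintype ι]

namespace Matrix

lemma IsHermitian.dotProduct_mulVec_comm {S : Matrix ι ι ℝ} (hS : S.IsHermitian) (x y : ι → ℝ) :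
    x ⬝ᵥ S *ᵥ y = y ⬝ᵥ S *ᵥ x := by
  rw [← dotProduct_transpose_mulVec, ← conjTranspose_eq_transpose_of_trivial, hS.eq]

lemma PosDef.dotProduct_mulVec_self_pos {S : Matrix ι ι ℝ} (hS : S.PosDef) {x : ι → ℝ}
    (hx : x ≠ 0) : 0 < x ⬝ᵥ S *ᵥ x := by
  simpa using hS.dotProduct_mulVec_pos hx

lemma PosSemidef.dotProduct_mulVec_self_nonneg {S : Matrix ι ι ℝ} (hS : S.PosSemidef)
    (x : ι → ℝ) : 0 ≤ x ⬝ᵥ S *ᵥ x := by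
  simpa using hS.dotProduct_mulVec_nonneg x

lemma PosSemidef.sq_dotProduct_mulVec_le {S : Matrix ι ι ℝ} (hS : S.PosSemidef) (x y : ι → ℝ) :
    (x ⬝ᵥ S *ᵥ y) ^ 2 ≤ (x ⬝ᵥ S *ᵥ x) * (y ⬝ᵥ S *ᵥ y) := by
  let _ := S.toSeminormedAddCommGroup hS
  let _ := S.toInnerProductSpace hS
  have hinner (a b : ι → ℝ) : (inner ℝ a b : ℝ) = a ⬝ᵥ S *ᵥ b := by
    change (S *ᵥ b) ⬝ᵥ star a = _
    rw [star_trivial, dotProduct_comm]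
  simpa only [hinner, sq] using real_inner_mul_inner_self_le x y

variable [DecidableEq ι]

lemma PosDef.mulVec_inv_mulVec {B : Matrix ι ι ℝ} (hB : B.PosDef) (w : ι → ℝ) :
    B *ᵥ (B⁻¹ *ᵥ w) = w := by
  rw [mulVec_mulVec, mul_nonsing_inv _ (isUnit_iff_ne_zero.mpr hB.det_pos.ne'), one_mulVec]

lemma PosDef.sq_dotProduct_le {B : Matrix ι ι ℝ} (hB : B.PosDef) (v w : ι → ℝ) :
    (v ⬝ᵥ w) ^ 2 ≤ (v ⬝ᵥ B *ᵥ v) * (w ⬝ᵥ B⁻¹ *ᵥ w) := by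
  simpa only [hB.mulVec_inv_mulVec, dotProduct_comm _ w] using
    hB.posSemidef.sq_dotProduct_mulVec_le v (B⁻¹ *ᵥ w)

lemma PosDef.mul_sq_dotProduct_le_of_le {A B : Matrix ι ι ℝ} (hB : B.PosDef) {ν : ℝ}
    (hν₀ : 0 ≤ ν) (hν : ∀ z, ν * (z ⬝ᵥ B *ᵥ z) ≤ z ⬝ᵥ A *ᵥ z) (v w : ι → ℝ) :
    ν * (v ⬝ᵥ w) ^ 2 ≤ (v ⬝ᵥ A *ᵥ v) * (w ⬝ᵥ B⁻¹ *ᵥ w) :=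
  calc ν * (v ⬝ᵥ w) ^ 2 ≤ ν * ((v ⬝ᵥ B *ᵥ v) * (w ⬝ᵥ B⁻¹ *ᵥ w)) :=
        mul_le_mul_of_nonneg_left (hB.sq_dotProduct_le v w) hν₀
    _ = ν * (v ⬝ᵥ B *ᵥ v) * (w ⬝ᵥ B⁻¹ *ᵥ w) := (mul_assoc _ _ _).symm
    _ ≤ (v ⬝ᵥ A *ᵥ v) * (w ⬝ᵥ B⁻¹ *ᵥ w) :=
        mul_le_mul_of_nonneg_right (hν v) (hB.inv.posSemidef.dotProduct_mulVec_self_nonneg w)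

end Matrix

section Calculus

variable {a b : ℝ → ι → ℝ} {a' b' : ι → ℝ} {t : ℝ}

lemma HasDerivAt.dotProduct (ha : HasDerivAt a a' t) (hb : HasDerivAt b b' t) :
    HasDerivAt (fun s => a s ⬝ᵥ b s) (a' ⬝ᵥ b t + a t ⬝ᵥ b') t := by
  rw [_root_.dotProduct, _root_.dotProduct, ← sum_add_distrib]
  exact HasDerivAt.fun_sum fun i _ => (hasDerivAt_pi.mp ha i).fun_mul (hasDerivAt_pi.mp hb i)

lemma HasDerivAt.mulVec (S : Matrix ι ι ℝ) (ha : HasDerivAt a a' t) :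
    HasDerivAt (fun s => S *ᵥ a s) (S *ᵥ a') t :=
  (LinearMap.toContinuousLinearMap S.mulVecLin).hasFDerivAt.comp_hasDerivAt t ha

lemma HasDerivAt.dotProduct_mulVec_self {S : Matrix ι ι ℝ} (hS : S.IsHermitian)
    (ha : HasDerivAt a a' t) :
    HasDerivAt (fun s => a s ⬝ᵥ S *ᵥ a s) (2 * (a' ⬝ᵥ S *ᵥ a t)) t := by
  convert ha.dotProduct (ha.mulVec S) using 1
  rw [hS.dotProduct_mulVec_comm (a t), two_mul]

lemma le_exp_mul_mul_of_hasDerivAt {e e' : ℝ → ℝ} {K : ℝ}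
    (he : ∀ s, 0 ≤ s → HasDerivAt e (e' s) s) (hbound : ∀ s, 0 ≤ s → e' s ≤ K * e s)
    (ht : 0 ≤ t) : e t ≤ Real.exp (K * t) * e 0 := by
  have := le_gronwallBound_of_liminf_deriv_right_le (ε := 0)
    (fun s hs => (he s hs.1).continuousAt.continuousWithinAt)
    (fun s hs r hr => (he s hs.1).hasDerivWithinAt.liminf_right_slope_le hr) le_rfl
    (fun s hs => by simpa using hbound s hs.1) t ⟨ht, le_rfl⟩
  rwa [gronwallBound_ε0, sub_zero, mul_comm] at this

lemma le_of_hasDerivAt_nonpos {e e' : ℝ → ℝ} (he : ∀ s, 0 ≤ s → HasDerivAt e (e' s) s)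
    (he' : ∀ s, 0 ≤ s → e' s ≤ 0) (ht : 0 ≤ t) : e t ≤ e 0 := by
  simpa using le_exp_mul_mul_of_hasDerivAt (K := 0) he (fun s hs => by simpa using he' s hs) ht

lemma eq_of_hasDerivAt_eq_zero {e : ℝ → ℝ} (he : ∀ s, 0 ≤ s → HasDerivAt e 0 s) (ht : 0 ≤ t) :
    e t = e 0 :=
  constant_of_has_deriv_right_zero (fun s hs => (he s hs.1).continuousAt.continuousWithinAt)
    (fun s hs => (he s hs.1).hasDerivWithinAt) t ⟨ht, le_rfl⟩

end Calculus

noncomputable def rayleighQuotient (A M : Matrix ι ι ℝ) (y : ι → ℝ) : ℝ :=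
  (y ⬝ᵥ A *ᵥ y) / (y ⬝ᵥ M *ᵥ y)

noncomputable def rayleighGrad (A M : Matrix ι ι ℝ) (y : ι → ℝ) : ι → ℝ :=
  (2 / (y ⬝ᵥ M *ᵥ y)) • (A *ᵥ y - rayleighQuotient A M y • (M *ᵥ y))

section Rayleigh

variable {A M : Matrix ι ι ℝ}

lemma dotProduct_rayleighGrad (z y : ι → ℝ) :
    z ⬝ᵥ rayleighGrad A M y =
      2 / (y ⬝ᵥ M *ᵥ y) * (z ⬝ᵥ A *ᵥ y - rayleighQuotient A M y * (z ⬝ᵥ M *ᵥ y)) := by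
  simp only [rayleighGrad, dotProduct_smul, dotProduct_sub, smul_eq_mul]

lemma dotProduct_rayleighGrad_self {y : ι → ℝ} (hy : y ⬝ᵥ M *ᵥ y ≠ 0) :
    y ⬝ᵥ rayleighGrad A M y = 0 := by
  rw [dotProduct_rayleighGrad, rayleighQuotient, div_mul_cancel₀ _ hy, sub_self, mul_zero]

lemma HasDerivAt.rayleighQuotient (hA : A.IsHermitian) (hM : M.IsHermitian)
    {y : ℝ → ι → ℝ} {y' : ι → ℝ} {t : ℝ} (hy : HasDerivAt y y' t)
    (hq : y t ⬝ᵥ M *ᵥ y t ≠ 0) :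
    HasDerivAt (fun s => _root_.rayleighQuotient A M (y s)) (y' ⬝ᵥ rayleighGrad A M (y t)) t := by
  refine ((hy.dotProduct_mulVec_self hA).div (hy.dotProduct_mulVec_self hM) hq).congr_deriv ?_
  rw [dotProduct_rayleighGrad, _root_.rayleighQuotient]
  field_simp

end Rayleigh

section Flow

variable [DecidableEq ι] {A M B : Matrix ι ι ℝ} {x : ℝ → ι → ℝ} {t : ℝ}

lemma hasDerivAt_rayleighQuotient_of_flow (hA : A.IsHermitian) (hM : M.PosDef)
    (hx : HasDerivAt x (-(B⁻¹ *ᵥ rayleighGrad A M (x t))) t) (hxt : x t ≠ 0) :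
    HasDerivAt (fun s => rayleighQuotient A M (x s))
      (-(rayleighGrad A M (x t) ⬝ᵥ B⁻¹ *ᵥ rayleighGrad A M (x t))) t := by
  convert hx.rayleighQuotient hA hM.isHermitian (hM.dotProduct_mulVec_self_pos hxt).ne' using 1
  rw [neg_dotProduct, dotProduct_comm]

lemma hasDerivAt_dotProduct_mulVec_self_of_flow (hM : M.PosDef) (hB : B.PosDef)
    (hx : HasDerivAt x (-(B⁻¹ *ᵥ rayleighGrad A M (x t))) t) (hxt : x t ≠ 0) :
    HasDerivAt (fun s => x s ⬝ᵥ B *ᵥ x s) 0 t := by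
  convert hx.dotProduct_mulVec_self hB.isHermitian using 1
  rw [neg_dotProduct, hB.isHermitian.dotProduct_mulVec_comm, hB.mulVec_inv_mulVec,
    dotProduct_rayleighGrad_self (hM.dotProduct_mulVec_self_pos hxt).ne', neg_zero, mul_zero]

end Flow

section Eigenbasis

variable {κ : Type*} [Fintype κ]

lemma sum_smul_dotProduct_mulVec_sum_smul (S : Matrix ι ι ℝ) (u : κ → ι → ℝ) (d e : κ → ℝ) :
    (∑ i, d i • u i) ⬝ᵥ S *ᵥ (∑ j, e j • u j) = ∑ i, ∑ j, d i * e j * (u i ⬝ᵥ S *ᵥ u j) := by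
  simp only [mulVec_sum, mulVec_smul, sum_dotProduct, dotProduct_sum, smul_dotProduct,
    dotProduct_smul, smul_eq_mul, mul_sum]
  rw [sum_comm]
  exact sum_congr rfl fun _ _ => sum_congr rfl fun _ _ => by ring

variable [DecidableEq κ] {A M : Matrix ι ι ℝ} {u : κ → ι → ℝ} {lam : κ → ℝ}

lemma sum_smul_dotProduct_mulVec_sum_smul_of_orthonormal
    (horth : ∀ i j, u i ⬝ᵥ M *ᵥ u j = if i = j then 1 else 0) (d e : κ → ℝ) :
    (∑ i, d i • u i) ⬝ᵥ M *ᵥ (∑ j, e j • u j) = ∑ i, d i * e i := by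
  simp [sum_smul_dotProduct_mulVec_sum_smul, horth]

lemma sum_smul_dotProduct_mulVec_sum_smul_of_eigen
    (horth : ∀ i j, u i ⬝ᵥ M *ᵥ u j = if i = j then 1 else 0)
    (heig : ∀ i, A *ᵥ u i = lam i • (M *ᵥ u i)) (d e : κ → ℝ) :
    (∑ i, d i • u i) ⬝ᵥ A *ᵥ (∑ j, e j • u j) = ∑ i, lam i * d i * e i := by
  simp [sum_smul_dotProduct_mulVec_sum_smul, heig, horth, mul_comm, mul_left_comm]

end Eigenbasis

lemma sum_dotProduct_mulVec_smul_eq_of_orthonormal [DecidableEq ι] {M : Matrix ι ι ℝ}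
    {u : ι → ι → ℝ} (horth : ∀ i j, u i ⬝ᵥ M *ᵥ u j = if i = j then 1 else 0) (y : ι → ℝ) :
    ∑ i, (u i ⬝ᵥ M *ᵥ y) • u i = y := by
  have hli : LinearIndependent ℝ u := by
    refine Fintype.linearIndependent_iff.mpr fun g hg j => ?_
    simpa [mulVec_sum, mulVec_smul, dotProduct_sum, horth] using
      congrArg (fun z => u j ⬝ᵥ M *ᵥ z) hg
  obtain ⟨c, rfl⟩ := (Submodule.mem_span_range_iff_exists_fun ℝ).mp
    ((hli.span_eq_top_of_card_eq_finrank' (by simp)).ge (Submodule.mem_top (x := y)))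
  simp [mulVec_sum, mulVec_smul, dotProduct_sum, horth]

lemma mul_sum_le_sum_mul_sq_sub_div {κ : Type*} [Fintype κ] {w lam : κ → ℝ} {l₀ l₁ r : ℝ}
    (hl₀ : 0 < l₀) (hl₁ : 0 < l₁) (hw : ∀ i, 0 ≤ w i) (hlam : ∀ i, 0 < lam i)
    (hgap : ∀ i, 0 ≤ (lam i - l₀) * (lam i - l₁)) (hmean : ∑ i, w i * (lam i - r) = 0) :
    r * (r - l₀) * (l₁ - r) / (l₀ * l₁) * ∑ i, w i ≤ ∑ i, w i * (lam i - r) ^ 2 / lam i := by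
  -- `r² / (l₀ l₁)` is the multiple of `∑ wᵢ (λᵢ - r) = 0` that turns each summand into a
  -- quadratic in `λᵢ` with roots `l₀` and `l₁`
  have hterm (i) : w i * (lam i - r) ^ 2 / lam i =
      r * (r - l₀) * (l₁ - r) / (l₀ * l₁) * w i
        + r ^ 2 / (l₀ * l₁) * (w i * ((lam i - l₀) * (lam i - l₁)) / lam i)
        - (r ^ 2 / (l₀ * l₁) - 1) * (w i * (lam i - r)) := by
    have := (hlam i).ne'
    field_simp
    ring
  rw [sum_congr rfl fun i _ => hterm i, sum_sub_distrib, sum_add_distrib, ← mul_sum, ← mul_sum,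
    ← mul_sum, hmean, mul_zero, sub_zero, le_add_iff_nonneg_right]
  exact mul_nonneg (by positivity)
    (sum_nonneg fun i _ => div_nonneg (mul_nonneg (hw i) (hgap i)) (hlam i).le)

lemma rate_mul_sub_le {l₀ l₁ r r₀ q a b : ℝ} (hl₀ : 0 < l₀) (hr : l₀ ≤ r) (hrr₀ : r ≤ r₀)
    (hr₀ : r₀ < l₁) (hq : 0 < q) (ha : 0 < a) (hb : r * q ≤ b) :
    4 * l₀ * (l₁ - r₀) / ((b / a) * l₁) * (r - l₀) ≤
      4 * a / q ^ 2 * (r * (r - l₀) * (l₁ - r) / (l₀ * l₁) * q) := by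
  have hr0 : 0 < r := hl₀.trans_le hr
  have hb0 : 0 < b := (mul_pos hr0 hq).trans_le hb
  have hl₁ : 0 < l₁ := by linarith
  have key : l₀ ^ 2 * (l₁ - r₀) * q ≤ r * (l₁ - r) * b :=
    calc l₀ ^ 2 * (l₁ - r₀) * q ≤ r ^ 2 * (l₁ - r) * q := by gcongr
      _ = r * (l₁ - r) * (r * q) := by ring
      _ ≤ r * (l₁ - r) * b := by gcongr; nlinarith
  rw [show 4 * l₀ * (l₁ - r₀) / ((b / a) * l₁) * (r - l₀)
      = 4 * a * (r - l₀) / (l₀ * l₁ * b) * (l₀ ^ 2 * (l₁ - r₀) * q) / q by field_simp,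
    show 4 * a / q ^ 2 * (r * (r - l₀) * (l₁ - r) / (l₀ * l₁) * q)
      = 4 * a * (r - l₀) / (l₀ * l₁ * b) * (r * (l₁ - r) * b) / q by field_simp]
  gcongr

lemma mul_sum_le_rayleighGrad_dotProduct_inv_mulVec [DecidableEq ι] {A M B : Matrix ι ι ℝ}
    {u : ι → ι → ℝ} {lam : ι → ℝ} {ν : ℝ} (hB : B.PosDef)
    (horth : ∀ i j, u i ⬝ᵥ M *ᵥ u j = if i = j then 1 else 0)
    (heig : ∀ i, A *ᵥ u i = lam i • (M *ᵥ u i)) (hlam : ∀ i, 0 < lam i) (hν₀ : 0 ≤ ν)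
    (hν : ∀ z, ν * (z ⬝ᵥ B *ᵥ z) ≤ z ⬝ᵥ A *ᵥ z) (y : ι → ℝ) :
    4 * ν / (y ⬝ᵥ M *ᵥ y) ^ 2 *
        ∑ i, (u i ⬝ᵥ M *ᵥ y) ^ 2 * (lam i - rayleighQuotient A M y) ^ 2 / lam i ≤
      rayleighGrad A M y ⬝ᵥ B⁻¹ *ᵥ rayleighGrad A M y := by
  set c : ι → ℝ := fun i => u i ⬝ᵥ M *ᵥ y
  set r := rayleighQuotient A M y with hr
  set g := rayleighGrad A M y
  set T := ∑ i, c i ^ 2 * (lam i - r) ^ 2 / lam i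
  set d : ι → ℝ := fun i => c i * (lam i - r) / lam i with hd
  set v := ∑ i, d i • u i
  have hy : ∑ i, c i • u i = y := sum_dotProduct_mulVec_smul_eq_of_orthonormal horth y
  have hvAv : v ⬝ᵥ A *ᵥ v = T := by
    rw [sum_smul_dotProduct_mulVec_sum_smul_of_eigen horth heig]
    refine sum_congr rfl fun i _ => ?_
    have := (hlam i).ne'
    simp only [hd]
    field_simp
  have hvg : v ⬝ᵥ g = 2 / (y ⬝ᵥ M *ᵥ y) * T := by
    have hvAy := sum_smul_dotProduct_mulVec_sum_smul_of_eigen horth heig d c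
    have hvMy := sum_smul_dotProduct_mulVec_sum_smul_of_orthonormal horth d c
    rw [hy] at hvAy hvMy
    rw [dotProduct_rayleighGrad, hvAy, hvMy, ← hr, mul_sum, ← sum_sub_distrib]
    congr 1
    refine sum_congr rfl fun i _ => ?_
    have := (hlam i).ne'
    simp only [hd]
    field_simp
  have hCS := hB.mul_sq_dotProduct_le_of_le hν₀ hν v g
  rw [hvg, hvAv] at hCS
  have hT : 0 ≤ T := sum_nonneg fun i _ => div_nonneg (by positivity) (hlam i).le
  rcases hT.eq_or_lt with hT | hT
  · rw [← hT, mul_zero]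
    exact hB.inv.posSemidef.dotProduct_mulVec_self_nonneg g
  · refine le_of_mul_le_mul_right ?_ hT
    calc 4 * ν / (y ⬝ᵥ M *ᵥ y) ^ 2 * T * T = ν * (2 / (y ⬝ᵥ M *ᵥ y) * T) ^ 2 := by ring
      _ ≤ T * (g ⬝ᵥ B⁻¹ *ᵥ g) := hCS
      _ = (g ⬝ᵥ B⁻¹ *ᵥ g) * T := mul_comm _ _

lemma mul_rayleighQuotient_sub_le_rayleighGrad_dotProduct {n : ℕ}
    {A M B : Matrix (Fin (n + 2)) (Fin (n + 2)) ℝ} {lam : Fin (n + 2) → ℝ}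
    {u : Fin (n + 2) → Fin (n + 2) → ℝ} {νmin νmax r₀ : ℝ} (hM : M.PosDef) (hB : B.PosDef)
    (hlam_pos : 0 < lam 0) (hmono : Monotone lam)
    (heig : ∀ i, A *ᵥ u i = lam i • (M *ᵥ u i))
    (horth : ∀ i j, u i ⬝ᵥ M *ᵥ u j = if i = j then 1 else 0) (hνmin : 0 < νmin)
    (hν : ∀ z, νmin * (z ⬝ᵥ B *ᵥ z) ≤ z ⬝ᵥ A *ᵥ z ∧ z ⬝ᵥ A *ᵥ z ≤ νmax * (z ⬝ᵥ B *ᵥ z))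
    {y : Fin (n + 2) → ℝ} (hy : y ≠ 0) (hyB : y ⬝ᵥ B *ᵥ y = 1)
    (hr₀ : rayleighQuotient A M y ≤ r₀) (hr₀₁ : r₀ < lam 1) :
    4 * lam 0 * (lam 1 - r₀) / ((νmax / νmin) * lam 1) * (rayleighQuotient A M y - lam 0) ≤
      rayleighGrad A M y ⬝ᵥ B⁻¹ *ᵥ rayleighGrad A M y := by
  set q := y ⬝ᵥ M *ᵥ y
  set c : Fin (n + 2) → ℝ := fun i => u i ⬝ᵥ M *ᵥ y
  set r := rayleighQuotient A M y with hr
  have hq : 0 < q := hM.dotProduct_mulVec_self_pos hy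
  have hlam (i) : 0 < lam i := hlam_pos.trans_le (hmono (Fin.zero_le i))
  have hexp : ∑ i, c i • u i = y := sum_dotProduct_mulVec_smul_eq_of_orthonormal horth y
  have hyMy := sum_smul_dotProduct_mulVec_sum_smul_of_orthonormal horth c c
  have hyAy := sum_smul_dotProduct_mulVec_sum_smul_of_eigen horth heig c c
  rw [hexp] at hyMy hyAy
  have hq_sum : q = ∑ i, c i ^ 2 := by simpa only [sq] using hyMy
  have hA_sum : y ⬝ᵥ A *ᵥ y = ∑ i, lam i * c i ^ 2 := by simpa only [sq, mul_assoc] using hyAy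
  have hrq : r * q = y ⬝ᵥ A *ᵥ y := div_mul_cancel₀ _ hq.ne'
  have hmean : ∑ i, c i ^ 2 * (lam i - r) = 0 :=
    calc ∑ i, c i ^ 2 * (lam i - r) = ∑ i, lam i * c i ^ 2 - r * ∑ i, c i ^ 2 := by
          rw [mul_sum, ← sum_sub_distrib]
          exact sum_congr rfl fun _ _ => by ring
      _ = 0 := by rw [← hA_sum, ← hq_sum, hrq, sub_self]
  have hr_ge : lam 0 ≤ r := by
    refine le_of_mul_le_mul_right ?_ hq
    rw [hrq, hq_sum, hA_sum, mul_sum]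
    exact sum_le_sum fun i _ => by gcongr; exact hmono (Fin.zero_le i)
  have hgap (i) : 0 ≤ (lam i - lam 0) * (lam i - lam 1) := by
    rcases eq_or_ne i 0 with rfl | hi
    · simp
    · exact mul_nonneg (sub_nonneg.2 (hmono (Fin.zero_le i)))
        (sub_nonneg.2 (hmono (Fin.one_le_of_ne_zero hi)))
  have hT : r * (r - lam 0) * (lam 1 - r) / (lam 0 * lam 1) * q ≤
      ∑ i, c i ^ 2 * (lam i - r) ^ 2 / lam i := by
    rw [hq_sum]
    exact mul_sum_le_sum_mul_sq_sub_div hlam_pos (hlam 1) (fun i => sq_nonneg (c i)) hlam hgap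
      hmean
  have hAy : r * q ≤ νmax := by simpa only [hrq, hyB, mul_one] using (hν y).2
  calc 4 * lam 0 * (lam 1 - r₀) / ((νmax / νmin) * lam 1) * (r - lam 0)
      ≤ 4 * νmin / q ^ 2 * (r * (r - lam 0) * (lam 1 - r) / (lam 0 * lam 1) * q) :=
        rate_mul_sub_le hlam_pos hr_ge hr₀ hr₀₁ hq hνmin hAy
    _ ≤ 4 * νmin / q ^ 2 * ∑ i, c i ^ 2 * (lam i - r) ^ 2 / lam i := by gcongr
    _ ≤ rayleighGrad A M y ⬝ᵥ B⁻¹ *ᵥ rayleighGrad A M y :=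
        mul_sum_le_rayleighGrad_dotProduct_inv_mulVec hB horth heig hlam hνmin.le
          (fun z => (hν z).1) y

theorem statement_1_general {n : ℕ}
    (A M B : Matrix (Fin (n+2)) (Fin (n+2)) ℝ)
    (hA : A.PosDef) (hM : M.PosDef) (hB : B.PosDef)
    (lam : Fin (n+2) → ℝ) (u : Fin (n+2) → (Fin (n+2) → ℝ))
    (hlam_pos : 0 < lam 0) (hmono : Monotone lam)
    (heig : ∀ i, A *ᵥ u i = lam i • (M *ᵥ u i))
    (horth : ∀ i j, u i ⬝ᵥ M *ᵥ u j = if i = j then 1 else 0)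
    (νmin νmax : ℝ) (hνmin : 0 < νmin)
    (hν : ∀ z, νmin * (z ⬝ᵥ B *ᵥ z) ≤ z ⬝ᵥ A *ᵥ z ∧ z ⬝ᵥ A *ᵥ z ≤ νmax * (z ⬝ᵥ B *ᵥ z))
    (x : ℝ → (Fin (n+2) → ℝ))
    (hxne : ∀ t : ℝ, 0 ≤ t → x t ≠ 0)
    (hflow : ∀ t : ℝ, 0 ≤ t → HasDerivAt x
      (-(B⁻¹ *ᵥ ((2 / (x t ⬝ᵥ M *ᵥ x t)) •
        (A *ᵥ x t - ((x t ⬝ᵥ A *ᵥ x t) / (x t ⬝ᵥ M *ᵥ x t)) • (M *ᵥ x t))))) t)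
    (hinit : x 0 ⬝ᵥ B *ᵥ x 0 = 1)
    (hinit2 : (x 0 ⬝ᵥ A *ᵥ x 0) / (x 0 ⬝ᵥ M *ᵥ x 0) < lam 1) :
    ∀ t : ℝ, 0 ≤ t →
      (x t ⬝ᵥ A *ᵥ x t) / (x t ⬝ᵥ M *ᵥ x t) - lam 0 ≤
        Real.exp (-(4 * lam 0 * (lam 1 - (x 0 ⬝ᵥ A *ᵥ x 0) / (x 0 ⬝ᵥ M *ᵥ x 0)) /
            ((νmax / νmin) * lam 1)) * t) *
          ((x 0 ⬝ᵥ A *ᵥ x 0) / (x 0 ⬝ᵥ M *ᵥ x 0) - lam 0) := by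
  have hderiv (t) (ht : 0 ≤ t) := hasDerivAt_rayleighQuotient_of_flow hA.isHermitian hM
    (hflow t ht) (hxne t ht)
  have hnorm (t) (ht : 0 ≤ t) : x t ⬝ᵥ B *ᵥ x t = 1 := hinit ▸ eq_of_hasDerivAt_eq_zero
    (fun s hs => hasDerivAt_dotProduct_mulVec_self_of_flow hM hB (hflow s hs) (hxne s hs)) ht
  have hdecr (t) (ht : 0 ≤ t) : rayleighQuotient A M (x t) ≤ rayleighQuotient A M (x 0) :=
    le_of_hasDerivAt_nonpos hderiv
      (fun s _ => neg_nonpos.2 (hB.inv.posSemidef.dotProduct_mulVec_self_nonneg _)) ht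
  refine fun t ht => le_exp_mul_mul_of_hasDerivAt
    (e := fun s => rayleighQuotient A M (x s) - lam 0)
    (fun s hs => (hderiv s hs).sub_const (lam 0)) (fun s hs => ?_) ht
  rw [neg_mul, neg_le_neg_iff]
  exact mul_rayleighQuotient_sub_le_rayleighGrad_dotProduct hM hB hlam_pos hmono heig horth hνmin
    hν (hxne s hs) (hnorm s hs) (hdecr s hs) hinit2

/-- Convergence of the preconditioned gradient flow for the Rayleigh quotient. -/
theorem statement_1 {n : ℕ}
    (A M B : Matrix (Fin (n+2)) (Fin (n+2)) ℝ)
    (hA : A.PosDef) (hM : M.PosDef) (hB : B.PosDef)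
    (lam : Fin (n+2) → ℝ) (u : Fin (n+2) → (Fin (n+2) → ℝ))
    (hlam_pos : 0 < lam 0) (hgap : lam 0 < lam 1) (hmono : Monotone lam)
    (heig : ∀ i, A *ᵥ u i = lam i • (M *ᵥ u i))
    (horth : ∀ i j, u i ⬝ᵥ M *ᵥ u j = if i = j then 1 else 0)
    (νmin νmax : ℝ) (hνmin : 0 < νmin) (hνmax : 0 < νmax)
    (hν : ∀ z, νmin * (z ⬝ᵥ B *ᵥ z) ≤ z ⬝ᵥ A *ᵥ z ∧ z ⬝ᵥ A *ᵥ z ≤ νmax * (z ⬝ᵥ B *ᵥ z))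
    (x : ℝ → (Fin (n+2) → ℝ))
    (hxne : ∀ t : ℝ, 0 ≤ t → x t ≠ 0)
    (hflow : ∀ t : ℝ, 0 ≤ t → HasDerivAt x
      (-(B⁻¹ *ᵥ ((2 / (x t ⬝ᵥ M *ᵥ x t)) •
        (A *ᵥ x t - ((x t ⬝ᵥ A *ᵥ x t) / (x t ⬝ᵥ M *ᵥ x t)) • (M *ᵥ x t))))) t)
    (hinit : x 0 ⬝ᵥ B *ᵥ x 0 = 1)
    (hinit2 : (x 0 ⬝ᵥ A *ᵥ x 0) / (x 0 ⬝ᵥ M *ᵥ x 0) < lam 1) :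
    ∀ t : ℝ, 0 ≤ t →
      (x t ⬝ᵥ A *ᵥ x t) / (x t ⬝ᵥ M *ᵥ x t) - lam 0 ≤
        Real.exp (-(4 * lam 0 * (lam 1 - (x 0 ⬝ᵥ A *ᵥ x 0) / (x 0 ⬝ᵥ M *ᵥ x 0)) /
            ((νmax / νmin) * lam 1)) * t) *
          ((x 0 ⬝ᵥ A *ᵥ x 0) / (x 0 ⬝ᵥ M *ᵥ x 0) - lam 0) :=
  statement_1_general A M B hA hM hB lam u hlam_pos hmono heig horth νmin νmax hνmin hν x hxne hflow
    hinit hinit2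
end

section
/- For any vectors x, v ∈ ℝⁿ with xᵀB v = 0, one has |xᵀA v| ≤ √(κ_ν − 1)·‖v‖_A·‖x‖_A, where κ_ν = ν_max/ν_min. (In particular the cosine of the leading angle ϑ(B,ρ*;f) is at most √(κ_ν − 1).) -/
/-!
Since `xᵀBv = 0`, the value `xᵀAv` is unchanged when `A` is replaced by `C = A - ν_min B`,
which is positive semidefinite by the lower spectral bound. Cauchy–Schwarz for `C` gives
`(xᵀAv)² ≤ (xᵀCx)(vᵀCv)`, and the upper spectral bound turns
`xᵀCx ≤ (ν_max - ν_min) xᵀBx = (κ_ν - 1) ν_min xᵀBx` into `xᵀCx ≤ (κ_ν - 1) xᵀAx`,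
while trivially `vᵀCv ≤ vᵀAv`.
-/

open Matrix

namespace Matrix

variable {ι : Type*} [Fintype ι]

lemma IsSymm.dotProduct_mulVec_comm {R : Type*} [CommSemiring R] {M : Matrix ι ι R}
    (hM : M.IsSymm) (x y : ι → R) : x ⬝ᵥ M *ᵥ y = y ⬝ᵥ M *ᵥ x := by
  rw [dotProduct_mulVec, ← mulVec_transpose, hM.eq, dotProduct_comm]

lemma dotProduct_mulVec_mul_le {R : Type*} [CommRing R] [LinearOrder R] [IsStrictOrderedRing R]
    {M : Matrix ι ι R} (hM : ∀ z, 0 ≤ z ⬝ᵥ M *ᵥ z) (x y : ι → R) :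
    (x ⬝ᵥ M *ᵥ y) * (y ⬝ᵥ M *ᵥ x) ≤ (x ⬝ᵥ M *ᵥ x) * (y ⬝ᵥ M *ᵥ y) := by
  classical
  simpa only [toBilin'_apply'] using
    (toBilin' M).apply_mul_apply_le_of_forall_zero_le (by simpa only [toBilin'_apply'] using hM) x y

lemma PosSemidef.dotProduct_mulVec_nonneg_real {M : Matrix ι ι ℝ} (hM : M.PosSemidef)
    (z : ι → ℝ) : 0 ≤ z ⬝ᵥ M *ᵥ z := by
  simpa only [star_trivial] using hM.dotProduct_mulVec_nonneg z

theorem sq_dotProduct_mulVec_le_of_dotProduct_mulVec_eq_zero {A B : Matrix ι ι ℝ}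
    (hA : A.IsSymm) (hB : B.PosSemidef) {νmin νmax : ℝ} (hνmin : 0 < νmin) (hle : νmin ≤ νmax)
    (hlower : ∀ z, νmin * (z ⬝ᵥ B *ᵥ z) ≤ z ⬝ᵥ A *ᵥ z)
    (hupper : ∀ z, z ⬝ᵥ A *ᵥ z ≤ νmax * (z ⬝ᵥ B *ᵥ z))
    {x v : ι → ℝ} (hxv : x ⬝ᵥ B *ᵥ v = 0) :
    (x ⬝ᵥ A *ᵥ v) ^ 2 ≤ (νmax / νmin - 1) * (v ⬝ᵥ A *ᵥ v) * (x ⬝ᵥ A *ᵥ x) := by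
  have hC (y z : ι → ℝ) :
      y ⬝ᵥ (A - νmin • B) *ᵥ z = y ⬝ᵥ A *ᵥ z - νmin * (y ⬝ᵥ B *ᵥ z) := by
    rw [sub_mulVec, smul_mulVec, dotProduct_sub, dotProduct_smul, smul_eq_mul]
  have hC_nonneg (z : ι → ℝ) : 0 ≤ z ⬝ᵥ (A - νmin • B) *ᵥ z := by
    rw [hC]; linarith [hlower z]
  have hvx : v ⬝ᵥ B *ᵥ x = 0 := by
    rw [(isHermitian_iff_isSymm.mp hB.isHermitian).dotProduct_mulVec_comm, hxv]
  have hCx : x ⬝ᵥ (A - νmin • B) *ᵥ x ≤ (νmax / νmin - 1) * (x ⬝ᵥ A *ᵥ x) := by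
    have hκ : 0 ≤ νmax / νmin - 1 := sub_nonneg.2 ((one_le_div hνmin).2 hle)
    calc x ⬝ᵥ (A - νmin • B) *ᵥ x ≤ (νmax - νmin) * (x ⬝ᵥ B *ᵥ x) := by
          rw [hC]; linarith [hupper x]
      _ = (νmax / νmin - 1) * (νmin * (x ⬝ᵥ B *ᵥ x)) := by field_simp
      _ ≤ (νmax / νmin - 1) * (x ⬝ᵥ A *ᵥ x) := mul_le_mul_of_nonneg_left (hlower x) hκ
  have hCv : v ⬝ᵥ (A - νmin • B) *ᵥ v ≤ v ⬝ᵥ A *ᵥ v := by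
    rw [hC]; nlinarith [hB.dotProduct_mulVec_nonneg_real v]
  calc (x ⬝ᵥ A *ᵥ v) ^ 2
      = (x ⬝ᵥ (A - νmin • B) *ᵥ v) * (v ⬝ᵥ (A - νmin • B) *ᵥ x) := by
        rw [hC, hC, hxv, hvx, hA.dotProduct_mulVec_comm v x]; ring
    _ ≤ (x ⬝ᵥ (A - νmin • B) *ᵥ x) * (v ⬝ᵥ (A - νmin • B) *ᵥ v) :=
        dotProduct_mulVec_mul_le hC_nonneg x v
    _ ≤ (νmax / νmin - 1) * (x ⬝ᵥ A *ᵥ x) * (v ⬝ᵥ A *ᵥ v) :=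
        mul_le_mul hCx hCv (hC_nonneg v) ((hC_nonneg x).trans hCx)
    _ = (νmax / νmin - 1) * (v ⬝ᵥ A *ᵥ v) * (x ⬝ᵥ A *ᵥ x) := by ring

end Matrix

theorem statement_8_general {n : ℕ}
    (A B : Matrix (Fin n) (Fin n) ℝ)
    (hA : A.PosDef) (hB : B.PosDef)
    (νmin νmax : ℝ) (hνmin : 0 < νmin)
    (hν : ∀ z, νmin * (z ⬝ᵥ B *ᵥ z) ≤ z ⬝ᵥ A *ᵥ z ∧ z ⬝ᵥ A *ᵥ z ≤ νmax * (z ⬝ᵥ B *ᵥ z))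
    (x v : Fin n → ℝ) (hxv : x ⬝ᵥ B *ᵥ v = 0) :
    |x ⬝ᵥ A *ᵥ v| ≤ Real.sqrt (νmax / νmin - 1) *
      Real.sqrt (v ⬝ᵥ A *ᵥ v) * Real.sqrt (x ⬝ᵥ A *ᵥ x) := by
  rcases eq_or_ne x 0 with rfl | hx
  · simp
  have hle : νmin ≤ νmax := by
    have hBx : 0 < x ⬝ᵥ B *ᵥ x := by simpa only [star_trivial] using hB.dotProduct_mulVec_pos hx
    exact le_of_mul_le_mul_right ((hν x).1.trans (hν x).2) hBx
  have hκ : 0 ≤ νmax / νmin - 1 := sub_nonneg.2 ((one_le_div hνmin).2 hle)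
  have hsq := sq_dotProduct_mulVec_le_of_dotProduct_mulVec_eq_zero
    (isHermitian_iff_isSymm.mp hA.isHermitian) hB.posSemidef hνmin hle
    (fun z => (hν z).1) (fun z => (hν z).2) hxv
  rw [← Real.sqrt_mul hκ, ← Real.sqrt_mul' _ (hA.posSemidef.dotProduct_mulVec_nonneg_real x)]
  exact Real.abs_le_sqrt hsq

/-- The cosine of the leading angle is bounded by √(κ_ν − 1). -/
theorem statement_8 {n : ℕ}
    (A B : Matrix (Fin n) (Fin n) ℝ)
    (hA : A.PosDef) (hB : B.PosDef)
    (νmin νmax : ℝ) (hνmin : 0 < νmin) (hνmax : 0 < νmax)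
    (hν : ∀ z, νmin * (z ⬝ᵥ B *ᵥ z) ≤ z ⬝ᵥ A *ᵥ z ∧ z ⬝ᵥ A *ᵥ z ≤ νmax * (z ⬝ᵥ B *ᵥ z))
    (x v : Fin n → ℝ) (hxv : x ⬝ᵥ B *ᵥ v = 0) :
    |x ⬝ᵥ A *ᵥ v| ≤ Real.sqrt (νmax / νmin - 1) *
      Real.sqrt (v ⬝ᵥ A *ᵥ v) * Real.sqrt (x ⬝ᵥ A *ᵥ x) :=
  statement_8_general A B hA hB νmin νmax hνmin hν x v hxv
end

section
/- Suppose λ₁ ≤ ρ* < (λ₁+λ₂)/2 and let cΘ ∈ [0,1] satisfy cΘ² ≤ (3ρ*⁻¹ − 2λ₁⁻¹ − λ₂⁻¹)/(2(λ₁⁻¹ − λ₂⁻¹)). Then every pair of nonzero vectors x, v with vᵀB x = 0, f(x) ≤ ρ*, and |vᵀA x| ≤ cΘ·‖v‖_A·‖x‖_A satisfies f(v) ≥ ρ*. -/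
/-!
Let `s` be defined by `ρ⁻¹ = s λ₁⁻¹ + (1 - s) λ₂⁻¹`, and let `cos² θ(y)` be the share of the
`A`-energy of `y` in the leading eigendirection. Since
`f(y)⁻¹ ≤ cos² θ(y) λ₁⁻¹ + (1 - cos² θ(y)) λ₂⁻¹`, the bound `f(x) ≤ ρ` forces `cos² θ(x) ≥ s`,
while `f(v) < ρ` would force `cos² θ(v) > s`. Both vectors then lie within `A`-angle
`arccos √s` of the leading eigenvector, so `|cos ∠_A(x, v)| > cos (2 arccos √s) = 2s - 1`.
But the hypothesis on `cΘ` gives `cΘ ≤ 2s - 1`, because `(3s - 2)/2 ≤ (2s - 1)²`.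
-/

open Matrix RealInnerProductSpace

section UnitVector

variable {E : Type*} [NormedAddCommGroup E] [InnerProductSpace ℝ E] {e : E}

lemma norm_sub_inner_smul_sq (he : ‖e‖ = 1) (x : E) :
    ‖x - ⟪x, e⟫ • e‖ ^ 2 = ‖x‖ ^ 2 - ⟪x, e⟫ ^ 2 := by
  rw [← real_inner_self_eq_norm_sq, ← real_inner_self_eq_norm_sq]
  simp only [inner_sub_left, inner_sub_right, inner_smul_left, inner_smul_right,
    real_inner_self_eq_norm_sq, he, real_inner_comm x e, RCLike.conj_to_real]
  ring

lemma inner_eq_add_inner_sub_inner_smul (he : ‖e‖ = 1) (v x : E) :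
    ⟪v, x⟫ = ⟪v, e⟫ * ⟪x, e⟫ + ⟪v - ⟪v, e⟫ • e, x - ⟪x, e⟫ • e⟫ := by
  simp only [inner_sub_left, inner_sub_right, inner_smul_left, inner_smul_right,
    real_inner_self_eq_norm_sq, he, real_inner_comm x e, RCLike.conj_to_real]
  ring

lemma two_mul_sub_one_mul_lt_abs_inner (he : ‖e‖ = 1) {s : ℝ} (hs : 0 < s) {x v : E}
    (hx0 : x ≠ 0) (hx : s * ‖x‖ ^ 2 ≤ ⟪x, e⟫ ^ 2) (hv : s * ‖v‖ ^ 2 < ⟪v, e⟫ ^ 2) :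
    (2 * s - 1) * (‖v‖ * ‖x‖) < |⟪v, x⟫| := by
  set x' := x - ⟪x, e⟫ • e
  set v' := v - ⟪v, e⟫ • e
  have hx' := norm_sub_inner_smul_sq he x
  have hv' := norm_sub_inner_smul_sq he v
  have hxpos : 0 < ‖x‖ := norm_pos_iff.2 hx0
  have hs1 : s ≤ 1 := by nlinarith [sq_nonneg ‖x'‖]
  have hlead : s * (‖v‖ * ‖x‖) < |⟪v, e⟫ * ⟪x, e⟫| := by
    have hsx : 0 < s * ‖x‖ ^ 2 := by positivity
    have hsq : (s * (‖v‖ * ‖x‖)) ^ 2 < (⟪v, e⟫ * ⟪x, e⟫) ^ 2 :=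
      calc (s * (‖v‖ * ‖x‖)) ^ 2 = (s * ‖v‖ ^ 2) * (s * ‖x‖ ^ 2) := by ring
        _ < ⟪v, e⟫ ^ 2 * (s * ‖x‖ ^ 2) := by gcongr
        _ ≤ ⟪v, e⟫ ^ 2 * ⟪x, e⟫ ^ 2 := by gcongr
        _ = (⟪v, e⟫ * ⟪x, e⟫) ^ 2 := by ring
    exact (le_abs_self _).trans_lt (sq_lt_sq.1 hsq)
  have htail : ‖v'‖ * ‖x'‖ ≤ (1 - s) * (‖v‖ * ‖x‖) := by
    have hsq : (‖v'‖ * ‖x'‖) ^ 2 ≤ ((1 - s) * (‖v‖ * ‖x‖)) ^ 2 :=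
      calc (‖v'‖ * ‖x'‖) ^ 2 = ‖v'‖ ^ 2 * ‖x'‖ ^ 2 := by ring
        _ ≤ ((1 - s) * ‖v‖ ^ 2) * ((1 - s) * ‖x‖ ^ 2) := by
          gcongr <;> linarith
        _ = ((1 - s) * (‖v‖ * ‖x‖)) ^ 2 := by ring
    exact (sq_le_sq₀ (by positivity) (mul_nonneg (sub_nonneg.2 hs1) (by positivity))).1 hsq
  calc (2 * s - 1) * (‖v‖ * ‖x‖) < |⟪v, e⟫ * ⟪x, e⟫| - ‖v'‖ * ‖x'‖ := by linarith
    _ ≤ |⟪v, e⟫ * ⟪x, e⟫| - |⟪v', x'⟫| := by gcongr; exact abs_real_inner_le_norm v' x'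
    _ ≤ |⟪v, x⟫| := by
      rw [inner_eq_add_inner_sub_inner_smul he v x]; exact abs_sub_abs_le_abs_add _ _

end UnitVector

lemma transpose_mulVec_dotProduct_mulVec_transpose_mulVec {ι m : Type*} [Fintype ι] [Fintype m]
    (U : Matrix m ι ℝ) (S : Matrix ι ι ℝ) (c d : m → ℝ) :
    Uᵀ *ᵥ c ⬝ᵥ S *ᵥ Uᵀ *ᵥ d = c ⬝ᵥ (U * S * Uᵀ) *ᵥ d := by
  rw [mulVec_transpose, dotProduct_mulVec, vecMul_vecMul, ← dotProduct_mulVec, mulVec_mulVec,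
    Matrix.mul_assoc]

section Eigenbasis

variable {ι : Type*} [Fintype ι]

-- `(of u *ᵥ M *ᵥ y) i = u i ⬝ᵥ M *ᵥ y` is the `i`-th coordinate of `y` in the `M`-orthonormal
-- basis `u`; scaling by `√λᵢ` makes the `A`-form Euclidean.
noncomputable def energyCoords (M : Matrix ι ι ℝ) (lam : ι → ℝ) (u : ι → ι → ℝ) (y : ι → ℝ) :
    EuclideanSpace ℝ ι :=
  WithLp.toLp 2 fun i => √(lam i) * (of u *ᵥ M *ᵥ y) i

variable {A M : Matrix ι ι ℝ} {lam : ι → ℝ} {u : ι → ι → ℝ}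

lemma energyCoords_apply_sq {i : ι} (hlam : 0 ≤ lam i) (y : ι → ℝ) :
    energyCoords M lam u y i ^ 2 = lam i * (of u *ᵥ M *ᵥ y) i ^ 2 := by
  simp [energyCoords, mul_pow, Real.sq_sqrt hlam]

variable [DecidableEq ι]

lemma of_mul_mul_transpose_eq_one (horth : ∀ i j, u i ⬝ᵥ M *ᵥ u j = if i = j then 1 else 0) :
    of u * M * (of u)ᵀ = 1 := by
  ext i j
  rw [mul_mul_apply, transpose_transpose, one_apply]
  exact horth i j

lemma of_mul_mul_transpose_eq_diagonal (heig : ∀ i, A *ᵥ u i = lam i • (M *ᵥ u i))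
    (horth : ∀ i j, u i ⬝ᵥ M *ᵥ u j = if i = j then 1 else 0) :
    of u * A * (of u)ᵀ = diagonal lam := by
  ext i j
  rw [mul_mul_apply, transpose_transpose, diagonal_apply]
  change u i ⬝ᵥ A *ᵥ u j = _
  rw [heig, dotProduct_smul, horth]
  split_ifs with h <;> simp [h]

lemma transpose_mulVec_of_mulVec_mulVec (horth : ∀ i j, u i ⬝ᵥ M *ᵥ u j = if i = j then 1 else 0)
    (y : ι → ℝ) : (of u)ᵀ *ᵥ of u *ᵥ M *ᵥ y = y := by
  have h : (of u)ᵀ * (of u * M) = 1 :=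
    mul_eq_one_comm.1 (of_mul_mul_transpose_eq_one horth)
  rw [mulVec_mulVec, mulVec_mulVec, Matrix.mul_assoc, h, one_mulVec]

lemma dotProduct_mulVec_eq_inner_energyCoords (heig : ∀ i, A *ᵥ u i = lam i • (M *ᵥ u i))
    (horth : ∀ i j, u i ⬝ᵥ M *ᵥ u j = if i = j then 1 else 0) (hlam : ∀ i, 0 ≤ lam i)
    (y z : ι → ℝ) : y ⬝ᵥ A *ᵥ z = ⟪energyCoords M lam u y, energyCoords M lam u z⟫ := by
  conv_lhs => rw [← transpose_mulVec_of_mulVec_mulVec horth y,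
    ← transpose_mulVec_of_mulVec_mulVec horth z,
    transpose_mulVec_dotProduct_mulVec_transpose_mulVec, of_mul_mul_transpose_eq_diagonal heig horth]
  simp only [energyCoords, dotProduct, mulVec_diagonal, PiLp.inner_apply, RCLike.inner_apply,
    conj_trivial]
  refine Finset.sum_congr rfl fun i _ => ?_
  rw [mul_mul_mul_comm, Real.mul_self_sqrt (hlam i)]
  ring

lemma dotProduct_mulVec_self_eq_sum_sq (horth : ∀ i j, u i ⬝ᵥ M *ᵥ u j = if i = j then 1 else 0)
    (y : ι → ℝ) : y ⬝ᵥ M *ᵥ y = ∑ i, (of u *ᵥ M *ᵥ y) i ^ 2 := by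
  conv_lhs => rw [← transpose_mulVec_of_mulVec_mulVec horth y,
    transpose_mulVec_dotProduct_mulVec_transpose_mulVec, of_mul_mul_transpose_eq_one horth,
    one_mulVec]
  simp only [dotProduct, sq]

lemma dotProduct_mulVec_self_le (heig : ∀ i, A *ᵥ u i = lam i • (M *ᵥ u i))
    (horth : ∀ i j, u i ⬝ᵥ M *ᵥ u j = if i = j then 1 else 0)
    {i₀ : ι} {μ : ℝ} (hi₀ : 0 < lam i₀) (hμ : 0 < μ) (hle : ∀ i ≠ i₀, μ ≤ lam i) (y : ι → ℝ) :
    let p := ⟪energyCoords M lam u y, EuclideanSpace.single i₀ 1⟫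
    y ⬝ᵥ M *ᵥ y ≤ p ^ 2 / lam i₀ + (y ⬝ᵥ A *ᵥ y - p ^ 2) / μ := by
  have hlam : ∀ i, 0 ≤ lam i := fun i =>
    if h : i = i₀ then h ▸ hi₀.le else hμ.le.trans (hle i h)
  set c := of u *ᵥ M *ᵥ y
  simp only [EuclideanSpace.inner_single_right, one_mul, conj_trivial]
  rw [dotProduct_mulVec_eq_inner_energyCoords heig horth hlam, real_inner_self_eq_norm_sq,
    dotProduct_mulVec_self_eq_sum_sq horth, EuclideanSpace.real_norm_sq_eq]
  simp_rw [energyCoords_apply_sq (hlam _)]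
  rw [← Finset.add_sum_erase _ _ (Finset.mem_univ i₀),
    ← Finset.add_sum_erase _ (fun i => lam i * c i ^ 2) (Finset.mem_univ i₀),
    mul_div_cancel_left₀ _ hi₀.ne', add_sub_cancel_left, Finset.sum_div]
  gcongr with i hi
  rw [le_div_iff₀ hμ, mul_comm (lam i)]
  exact mul_le_mul_of_nonneg_left (hle i (Finset.ne_of_mem_erase hi)) (sq_nonneg _)

end Eigenbasis

/-- The weight `s` with `ρ⁻¹ = s * l⁻¹ + (1 - s) * m⁻¹`. -/
noncomputable def interpWeight (l m ρ : ℝ) : ℝ := (ρ⁻¹ - m⁻¹) / (l⁻¹ - m⁻¹)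

section InterpWeight

variable {l m ρ N P Q : ℝ}

lemma interpWeight_mul_le_of_div_le (hl : 0 < l) (hlm : l < m) (hρ : 0 < ρ) (hQ : 0 < Q)
    (hQle : Q ≤ P / l + (N - P) / m) (h : N / Q ≤ ρ) : interpWeight l m ρ * N ≤ P := by
  have hd : 0 < l⁻¹ - m⁻¹ := sub_pos.2 (inv_strictAnti₀ hl hlm)
  have hN : ρ⁻¹ * N ≤ Q := by
    rw [inv_mul_le_iff₀ hρ]; exact (div_le_iff₀ hQ).1 h
  rw [interpWeight, div_mul_eq_mul_div, div_le_iff₀ hd]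
  simp only [div_eq_mul_inv] at hQle
  linear_combination hN + hQle

lemma le_div_of_le_interpWeight_mul (hl : 0 < l) (hlm : l < m) (hρ : 0 < ρ) (hQ : 0 < Q)
    (hQle : Q ≤ P / l + (N - P) / m) (h : P ≤ interpWeight l m ρ * N) : ρ ≤ N / Q := by
  have hd : 0 < l⁻¹ - m⁻¹ := sub_pos.2 (inv_strictAnti₀ hl hlm)
  rw [interpWeight, div_mul_eq_mul_div, le_div_iff₀ hd] at h
  rw [le_div_iff₀ hQ, ← le_inv_mul_iff₀ hρ]
  simp only [div_eq_mul_inv] at hQle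
  linear_combination hQle + h

lemma interpWeight_formula (hl : 0 < l) (hlm : l < m) :
    (3 * ρ⁻¹ - 2 * l⁻¹ - m⁻¹) / (2 * (l⁻¹ - m⁻¹)) = (3 * interpWeight l m ρ - 2) / 2 := by
  have hd : l⁻¹ - m⁻¹ ≠ 0 := (sub_pos.2 (inv_strictAnti₀ hl hlm)).ne'
  rw [interpWeight]
  generalize l⁻¹ = a, m⁻¹ = b at *
  field_simp
  ring

end InterpWeight

lemma pos_and_le_two_mul_sub_one_of_sq_le {c s : ℝ} (h : c ^ 2 ≤ (3 * s - 2) / 2) :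
    0 < s ∧ c ≤ 2 * s - 1 := by
  constructor <;> nlinarith [sq_nonneg c, sq_nonneg (4 * s - 3)]

theorem statement_11_general {n : ℕ}
    (A M : Matrix (Fin (n+2)) (Fin (n+2)) ℝ)
    (hA : A.PosDef) (hM : M.PosDef)
    (lam : Fin (n+2) → ℝ) (u : Fin (n+2) → (Fin (n+2) → ℝ))
    (hlam_pos : 0 < lam 0) (hgap : lam 0 < lam 1) (hmono : Monotone lam)
    (heig : ∀ i, A *ᵥ u i = lam i • (M *ᵥ u i))
    (horth : ∀ i j, u i ⬝ᵥ M *ᵥ u j = if i = j then 1 else 0)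
    (ρstar : ℝ) (hρ1 : lam 0 ≤ ρstar)
    (cΘ : ℝ)
    (hcΘ : cΘ ^ 2 ≤ (3 * ρstar⁻¹ - 2 * (lam 0)⁻¹ - (lam 1)⁻¹) / (2 * ((lam 0)⁻¹ - (lam 1)⁻¹)))
    (x v : Fin (n+2) → ℝ) (hx : x ≠ 0) (hv : v ≠ 0)
    (hfx : (x ⬝ᵥ A *ᵥ x) / (x ⬝ᵥ M *ᵥ x) ≤ ρstar)
    (hangle : |v ⬝ᵥ A *ᵥ x| ≤ cΘ * Real.sqrt (v ⬝ᵥ A *ᵥ v) * Real.sqrt (x ⬝ᵥ A *ᵥ x)) :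
    ρstar ≤ (v ⬝ᵥ A *ᵥ v) / (v ⬝ᵥ M *ᵥ v) := by
  have hρ : 0 < ρstar := hlam_pos.trans_le hρ1
  have hlam : ∀ i, 0 ≤ lam i := fun i => hlam_pos.le.trans (hmono (Fin.zero_le i))
  have hlam1 : ∀ i ≠ 0, lam 1 ≤ lam i := fun i hi => hmono (Fin.one_le_of_ne_zero hi)
  set w := energyCoords M lam u
  set e : EuclideanSpace ℝ (Fin (n+2)) := EuclideanSpace.single 0 1
  set s := interpWeight (lam 0) (lam 1) ρstar
  have hAw : ∀ y z, y ⬝ᵥ A *ᵥ z = ⟪w y, w z⟫ :=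
    dotProduct_mulVec_eq_inner_energyCoords heig horth hlam
  have hMw := dotProduct_mulVec_self_le heig horth hlam_pos (hlam_pos.trans hgap) hlam1
  obtain ⟨hs, hcΘs⟩ :=
    pos_and_le_two_mul_sub_one_of_sq_le (interpWeight_formula hlam_pos hgap ▸ hcΘ)
  have hxs : s * ‖w x‖ ^ 2 ≤ ⟪w x, e⟫ ^ 2 := by
    rw [← real_inner_self_eq_norm_sq, ← hAw]
    exact interpWeight_mul_le_of_div_le hlam_pos hgap hρ (hM.dotProduct_mulVec_pos hx) (hMw x) hfx
  by_contra hfv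
  have hvs : s * ‖w v‖ ^ 2 < ⟪w v, e⟫ ^ 2 := by
    rw [← real_inner_self_eq_norm_sq, ← hAw]
    exact lt_of_not_ge fun h => hfv <|
      le_div_of_le_interpWeight_mul hlam_pos hgap hρ (hM.dotProduct_mulVec_pos hv) (hMw v) h
  have hwx : w x ≠ 0 := by
    have hxA : 0 < x ⬝ᵥ A *ᵥ x := hA.dotProduct_mulVec_pos hx
    rwa [hAw, real_inner_self_pos] at hxA
  have hlt := two_mul_sub_one_mul_lt_abs_inner (by simp [e]) hs hwx hxs hvs
  rw [hAw, hAw v v, hAw x x, real_inner_self_eq_norm_sq, real_inner_self_eq_norm_sq,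
    Real.sqrt_sq (norm_nonneg _), Real.sqrt_sq (norm_nonneg _)] at hangle
  nlinarith [mul_nonneg (norm_nonneg (w v)) (norm_nonneg (w x))]

/-- Under a small leading angle, B-orthogonal directions have large Rayleigh quotient. -/
theorem statement_11 {n : ℕ}
    (A M B : Matrix (Fin (n+2)) (Fin (n+2)) ℝ)
    (hA : A.PosDef) (hM : M.PosDef) (hB : B.PosDef)
    (lam : Fin (n+2) → ℝ) (u : Fin (n+2) → (Fin (n+2) → ℝ))
    (hlam_pos : 0 < lam 0) (hgap : lam 0 < lam 1) (hmono : Monotone lam)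
    (heig : ∀ i, A *ᵥ u i = lam i • (M *ᵥ u i))
    (horth : ∀ i j, u i ⬝ᵥ M *ᵥ u j = if i = j then 1 else 0)
    (ρstar : ℝ) (hρ1 : lam 0 ≤ ρstar) (hρ2 : ρstar < (lam 0 + lam 1) / 2)
    (cΘ : ℝ) (hcΘ0 : 0 ≤ cΘ) (hcΘ1 : cΘ ≤ 1)
    (hcΘ : cΘ ^ 2 ≤ (3 * ρstar⁻¹ - 2 * (lam 0)⁻¹ - (lam 1)⁻¹) / (2 * ((lam 0)⁻¹ - (lam 1)⁻¹)))
    (x v : Fin (n+2) → ℝ) (hx : x ≠ 0) (hv : v ≠ 0)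
    (hvBx : v ⬝ᵥ B *ᵥ x = 0)
    (hfx : (x ⬝ᵥ A *ᵥ x) / (x ⬝ᵥ M *ᵥ x) ≤ ρstar)
    (hangle : |v ⬝ᵥ A *ᵥ x| ≤ cΘ * Real.sqrt (v ⬝ᵥ A *ᵥ v) * Real.sqrt (x ⬝ᵥ A *ᵥ x)) :
    ρstar ≤ (v ⬝ᵥ A *ᵥ v) / (v ⬝ᵥ M *ᵥ v) :=
  statement_11_general A M hA hM lam u hlam_pos hgap hmono heig horth ρstar hρ1 cΘ hcΘ x v hx hv hfx
    hangle
end
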